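/- The series ∑_{m=0}^∞ a/((m+1)(m+a)) with a = 11/6 equals (11/5)·(6/5 − log 12 + √3·π/2 − log √3). -/

import Mathlib

open Real MeasureTheory intervalIntegral

-- antiderivative
noncomputable def Fad (t : ℝ) : ℝ :=
  (1/3) * Real.log (1+t) + (1/4) * Real.log (1+t+t^2) + (1/12) * Real.log (1-t+t^2)
    - ((Real.sqrt 3/6) * Real.arctan ((2*t+1)/Real.sqrt 3)
       + (Real.sqrt 3/6) * Real.arctan ((2*t-1)/Real.sqrt 3))

lemma arctan_term_deriv (c t : ℝ) :
    HasDerivAt (fun t => (Real.sqrt 3/6) * Real.arctan ((2*t+c)/Real.sqrt 3))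
      (1/(3+(2*t+c)^2)) t := by
  have hs : Real.sqrt 3 ^ 2 = 3 := Real.sq_sqrt (by norm_num)
  have hs0 : Real.sqrt 3 ≠ 0 := by positivity
  have hinner : HasDerivAt (fun t : ℝ => (2*t+c)/Real.sqrt 3) (2/Real.sqrt 3) t := by
    have : HasDerivAt (fun t : ℝ => 2*t+c) 2 t := by
      simpa using ((hasDerivAt_id t).const_mul 2).add_const c
    simpa using this.div_const (Real.sqrt 3)
  have := (hinner.arctan).const_mul (Real.sqrt 3/6)
  convert this using 1
  rfl; rfl
  have hpos : (0:ℝ) < 3 + (2*t+c)^2 := by positivity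
  field_simp
  rw [hs]
  ring

lemma denom_pos1 (t : ℝ) : (0:ℝ) < 1+t+t^2 := by nlinarith [sq_nonneg (t+1), sq_nonneg t]
lemma denom_pos2 (t : ℝ) : (0:ℝ) < 1-t+t^2 := by nlinarith [sq_nonneg (t-1), sq_nonneg t]

lemma Fad_deriv {t : ℝ} (ht : t ∈ Set.uIcc (0:ℝ) 1) :
    HasDerivAt Fad (t^4/((1+t)*((1+t+t^2)*(1-t+t^2)))) t := by
  rw [Set.uIcc_of_le (by norm_num : (0:ℝ) ≤ 1)] at ht
  have ht0 : (0:ℝ) ≤ t := ht.1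
  have h1 : (0:ℝ) < 1 + t := by linarith
  have h2 := denom_pos1 t
  have h3 := denom_pos2 t
  have d1 : HasDerivAt (fun t : ℝ => (1/3) * Real.log (1+t)) (1/(3*(1+t))) t := by
    have : HasDerivAt (fun t : ℝ => 1+t) 1 t := by simpa using (hasDerivAt_id t).const_add 1
    have := (this.log h1.ne').const_mul (1/3 : ℝ)
    convert this using 1; rfl; rfl; field_simp
  have d2 : HasDerivAt (fun t : ℝ => (1/4) * Real.log (1+t+t^2)) ((2*t+1)/(4*(1+t+t^2))) t := by
    have hp : HasDerivAt (fun t : ℝ => 1+t+t^2) (1+2*t) t := by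
      simpa [Pi.add_def] using ((hasDerivAt_id t).const_add 1).add ((hasDerivAt_pow 2 t))
    have := (hp.log h2.ne').const_mul (1/4 : ℝ)
    convert this using 1; rfl; rfl; field_simp; ring
  have d3 : HasDerivAt (fun t : ℝ => (1/12) * Real.log (1-t+t^2)) ((2*t-1)/(12*(1-t+t^2))) t := by
    have hp : HasDerivAt (fun t : ℝ => 1-t+t^2) (-1+2*t) t := by
      have : HasDerivAt (fun t : ℝ => 1-t) (-1) t := by
        simpa using (hasDerivAt_id t).const_sub 1
      simpa [sub_eq_add_neg, Pi.add_def] using this.add (hasDerivAt_pow 2 t)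
    have := (hp.log h3.ne').const_mul (1/12 : ℝ)
    convert this using 1; rfl; rfl; field_simp; ring
  have d4 := arctan_term_deriv 1 t
  have d5 := arctan_term_deriv (-1) t
  have d5' : HasDerivAt (fun t => (Real.sqrt 3/6) * Real.arctan ((2*t-1)/Real.sqrt 3))
      (1/(3+(2*t-1)^2)) t := by
    convert d5 using 2 <;> ring_nf
  have D := ((d1.add d2).add d3).sub (d4.add d5')
  have hFad : Fad = fun t => ((1/3) * Real.log (1+t) + (1/4) * Real.log (1+t+t^2)
      + (1/12) * Real.log (1-t+t^2))
      - ((Real.sqrt 3/6) * Real.arctan ((2*t+1)/Real.sqrt 3)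
         + (Real.sqrt 3/6) * Real.arctan ((2*t-1)/Real.sqrt 3)) := by
    funext x; unfold Fad; ring
  rw [hFad]
  convert D using 1
  rfl; rfl; rfl
  have e1 : 3 + (2*t+1)^2 = 4*(1+t+t^2) := by ring
  have e2 : 3 + (2*t-1)^2 = 4*(1-t+t^2) := by ring
  rw [e1, e2]
  field_simp
  ring

lemma arctan_sqrt3 : Real.arctan (Real.sqrt 3) = Real.pi / 3 := by
  have h : Real.tan (Real.pi/3) = Real.sqrt 3 := Real.tan_pi_div_three
  rw [← h, Real.arctan_tan] <;> nlinarith [Real.pi_pos]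

lemma arctan_inv_sqrt3 : Real.arctan (1 / Real.sqrt 3) = Real.pi / 6 := by
  have hs : Real.sqrt 3 > 0 := by positivity
  have h : Real.tan (Real.pi/6) = 1 / Real.sqrt 3 := by
    rw [Real.tan_eq_sin_div_cos, Real.sin_pi_div_six, Real.cos_pi_div_six]
    field_simp
  rw [← h, Real.arctan_tan] <;> nlinarith [Real.pi_pos]

lemma integrand_contOn : ContinuousOn
    (fun t : ℝ => t^4/((1+t)*((1+t+t^2)*(1-t+t^2)))) (Set.uIcc 0 1) := by
  apply ContinuousOn.div (by fun_prop) (by fun_prop)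
  intro t ht
  rw [Set.uIcc_of_le (by norm_num : (0:ℝ) ≤ 1)] at ht
  have h1 : (0:ℝ) < 1 + t := by linarith [ht.1]
  have h2 := denom_pos1 t
  have h3 := denom_pos2 t
  positivity

lemma integral_eval :
    ∫ t in (0:ℝ)..1, t^4/((1+t)*((1+t+t^2)*(1-t+t^2)))
      = 1/3 * Real.log 2 + 1/4 * Real.log 3 - Real.pi * Real.sqrt 3 / 12 := by
  rw [intervalIntegral.integral_eq_sub_of_hasDerivAt (fun t ht => Fad_deriv ht)
    (integrand_contOn.intervalIntegrable)]
  have hs : Real.sqrt 3 ^ 2 = 3 := Real.sq_sqrt (by norm_num)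
  have hs0 : Real.sqrt 3 ≠ 0 := by positivity
  have e1 : (2*(1:ℝ)+1)/Real.sqrt 3 = Real.sqrt 3 := by
    rw [div_eq_iff hs0]; nlinarith
  have e2 : (2*(1:ℝ)-1)/Real.sqrt 3 = 1/Real.sqrt 3 := by norm_num
  have e3 : (2*(0:ℝ)+1)/Real.sqrt 3 = 1/Real.sqrt 3 := by norm_num
  have e4 : (2*(0:ℝ)-1)/Real.sqrt 3 = -(1/Real.sqrt 3) := by ring
  unfold Fad
  rw [e1, e2, e3, e4, arctan_sqrt3, arctan_inv_sqrt3, Real.arctan_neg, arctan_inv_sqrt3]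
  norm_num
  rw [show (3:ℝ) = 1+1+1^2 by norm_num]
  ring

lemma term_integral (m : ℕ) :
    ∫ t in (0:ℝ)..1, t^(6*m+4)*(1-t) = 1/((6*(m:ℝ)+5)*(6*(m:ℝ)+6)) := by
  have : ∀ t : ℝ, t^(6*m+4)*(1-t) = t^(6*m+4) - t^(6*m+5) := by intro t; ring
  simp_rw [this]
  rw [intervalIntegral.integral_sub (intervalIntegral.intervalIntegrable_pow _)
    (intervalIntegral.intervalIntegrable_pow _), integral_pow, integral_pow]
  push_cast
  have h1 : (6*(m:ℝ)+4+1) ≠ 0 := by positivity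
  have h2 : (6*(m:ℝ)+5+1) ≠ 0 := by positivity
  have h3 : (6*(m:ℝ)+5) ≠ 0 := by positivity
  have h4 : (6*(m:ℝ)+6) ≠ 0 := by positivity
  field_simp
  ring

lemma hasSum_h : HasSum (fun m : ℕ => 1/((6*(m:ℝ)+5)*(6*(m:ℝ)+6)))
    (1/3 * Real.log 2 + 1/4 * Real.log 3 - Real.pi * Real.sqrt 3 / 12) := by
  have hint : ∀ m : ℕ, IntegrableOn (fun t : ℝ => t^(6*m+4)*(1-t)) (Set.Ioo (0:ℝ) 1) := by
    intro m
    have : IntegrableOn (fun t : ℝ => t^(6*m+4)*(1-t)) (Set.Icc (0:ℝ) 1) :=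
      Continuous.integrableOn_Icc (by fun_prop)
    exact this.mono_set Set.Ioo_subset_Icc_self
  have hIoo : ∀ m : ℕ, ∫ t in Set.Ioo (0:ℝ) 1, t^(6*m+4)*(1-t)
      = 1/((6*(m:ℝ)+5)*(6*(m:ℝ)+6)) := by
    intro m
    rw [← MeasureTheory.integral_Ioc_eq_integral_Ioo,
      ← intervalIntegral.integral_of_le (by norm_num : (0:ℝ) ≤ 1)]
    exact term_integral m
  have hnorm : ∀ m : ℕ, ∫ t in Set.Ioo (0:ℝ) 1, ‖t^(6*m+4)*(1-t)‖
      = 1/((6*(m:ℝ)+5)*(6*(m:ℝ)+6)) := by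
    intro m
    rw [← hIoo m]
    apply MeasureTheory.setIntegral_congr_fun measurableSet_Ioo
    intro t ht
    have h1 : (0:ℝ) ≤ t := le_of_lt ht.1
    have h2 : t ≤ 1 := le_of_lt ht.2
    simp only []
    rw [Real.norm_of_nonneg (mul_nonneg (by positivity) (by linarith))]
  have hsum : Summable (fun m : ℕ => ∫ t in Set.Ioo (0:ℝ) 1, ‖t^(6*m+4)*(1-t)‖) := by
    simp_rw [hnorm]
    have hbase : Summable (fun m : ℕ => 1/((m:ℝ)+1)^2) := by
      have h0 : Summable (fun n : ℕ => 1/(n:ℝ)^(2:ℕ)) :=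
        Real.summable_one_div_nat_pow.mpr (by norm_num)
      have h2 := (summable_nat_add_iff 1).mpr h0
      refine h2.congr fun n => ?_
      push_cast
      norm_num
    apply Summable.of_nonneg_of_le (fun m => by positivity) (fun m => ?_) hbase
    have hm : (0:ℝ) ≤ (m:ℝ) := Nat.cast_nonneg m
    apply one_div_le_one_div_of_le (by positivity)
    nlinarith
  have key := MeasureTheory.hasSum_integral_of_summable_integral_norm
    (μ := MeasureTheory.volume.restrict (Set.Ioo (0:ℝ) 1))
    (F := fun (m : ℕ) (t : ℝ) => t^(6*m+4)*(1-t)) hint hsum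
  simp_rw [hIoo] at key
  convert key using 1
  rfl
  rw [← integral_eval,
    intervalIntegral.integral_of_le (by norm_num : (0:ℝ) ≤ 1),
    MeasureTheory.integral_Ioc_eq_integral_Ioo]
  apply MeasureTheory.setIntegral_congr_fun measurableSet_Ioo
  intro t ht
  have h1 : (0:ℝ) < t := ht.1
  have h2 : t < 1 := ht.2
  simp only []
  have hgeom : HasSum (fun m : ℕ => (t^6)^m * (t^4*(1-t))) ((1-t^6)⁻¹ * (t^4*(1-t))) := by
    exact (hasSum_geometric_of_lt_one (by positivity)
      (by nlinarith [pow_lt_one₀ (le_of_lt h1) h2 (by norm_num : (6:ℕ) ≠ 0)])).mul_right _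
  have hfun : (fun m : ℕ => (t^6)^m * (t^4*(1-t))) = fun m : ℕ => t^(6*m+4)*(1-t) := by
    funext m
    rw [← pow_mul]
    ring
  rw [hfun] at hgeom
  rw [hgeom.tsum_eq]
  have h6 : (1:ℝ) - t^6 ≠ 0 := by nlinarith [pow_lt_one₀ (le_of_lt h1) h2 (by norm_num : (6:ℕ) ≠ 0)]
  have hd1 : (0:ℝ) < 1 + t := by linarith
  have hd2 := denom_pos1 t
  have hd3 := denom_pos2 t
  field_simp
  ring

lemma hasSum_tele : HasSum (fun m : ℕ => 1/((m:ℝ)+5/6) - 1/((m:ℝ)+1+5/6)) (6/5) := by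
  set g : ℕ → ℝ := fun m => 1/((m:ℝ)+5/6) with hg
  have hfun : (fun m : ℕ => 1/((m:ℝ)+5/6) - 1/((m:ℝ)+1+5/6)) = fun m => g m - g (m+1) := by
    funext m; simp [hg]
  rw [hfun]
  have hnonneg : ∀ m : ℕ, 0 ≤ g m - g (m+1) := by
    intro m
    have h1 : (0:ℝ) < (m:ℝ)+5/6 := by positivity
    have h2 : (0:ℝ) < ((m:ℕ)+1:ℕ)+5/6 := by positivity
    simp only [hg]
    rw [sub_nonneg]
    apply one_div_le_one_div_of_le h1
    push_cast; linarith
  rw [hasSum_iff_tendsto_nat_of_nonneg hnonneg]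
  have hps : ∀ n : ℕ, ∑ i ∈ Finset.range n, (g i - g (i+1)) = g 0 - g n :=
    fun n => Finset.sum_range_sub' g n
  simp_rw [hps]
  have h0 : g 0 = 6/5 := by norm_num [hg]
  rw [h0]
  have hto : Filter.Tendsto g Filter.atTop (nhds 0) := by
    have : Filter.Tendsto (fun n : ℕ => (n:ℝ)+5/6) Filter.atTop Filter.atTop :=
      Filter.tendsto_atTop_add_const_right _ _ tendsto_natCast_atTop_atTop
    simpa [hg, one_div, Pi.inv_def] using this.inv_tendsto_atTop
  simpa using hto.const_sub (6/5 : ℝ)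

theorem stmt_7 :
    (∑' m : ℕ, (11/6 : ℝ) / ((m + 1) * (m + (11/6 : ℝ)))) = (11/5) * (6/5 - Real.log 12 + Real.sqrt 3 * Real.pi / 2 - Real.log (Real.sqrt 3)) := by
  have h := (hasSum_tele.sub (hasSum_h.mul_left 6)).mul_left (11/5 : ℝ)
  have hterm : ∀ m : ℕ, (11/6 : ℝ) / ((m + 1) * (m + (11/6 : ℝ)))
      = 11/5 * ((1/((m:ℝ)+5/6) - 1/((m:ℝ)+1+5/6)) - 6 * (1/((6*(m:ℝ)+5)*(6*(m:ℝ)+6)))) := by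
    intro m
    have hm : (0:ℝ) ≤ (m:ℝ) := Nat.cast_nonneg m
    have h1 : ((m:ℝ)+1) ≠ 0 := by positivity
    have h2 : ((m:ℝ)+11/6) ≠ 0 := by positivity
    have h3 : ((m:ℝ)+5/6) ≠ 0 := by positivity
    have h4 : ((m:ℝ)+1+5/6) ≠ 0 := by positivity
    have h5 : (6*(m:ℝ)+5) ≠ 0 := by positivity
    have h6 : (6*(m:ℝ)+6) ≠ 0 := by positivity
    field_simp
    ring
  rw [tsum_congr hterm, h.tsum_eq]
  have l12 : Real.log 12 = 2 * Real.log 2 + Real.log 3 := by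
    rw [show (12:ℝ) = 2^2*3 by norm_num, Real.log_mul (by norm_num) (by norm_num),
      Real.log_pow]
    push_cast; ring
  have lsqrt : Real.log (Real.sqrt 3) = Real.log 3 / 2 :=
    Real.log_sqrt (by norm_num)
  rw [l12, lsqrt]
  ring
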